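/- arXiv:1004.4828 — 2 statements merged into one kernel-verified Lean document; each statement's English description precedes it below -/
import Mathlib

section
/- For x in the unit ball, the last coordinate (Tx)_n of Tx satisfies (Tx)_n = η(x)(1 − |x|²)/2 = (1 − |x|²)/(|x'|² + (x_n+1)²). In particular ∫_{ℝ₊ⁿ} f²(x) x_n^{−α} dx = ∫_{B(0,1)} (2/(1−|ω|²))^α \tilde f²(ω) dω, where \tilde f(ω) = η(ω)^{n/2*} f(Tω) and 2* = 2n/(n−α). -/
open MeasureTheory

/-- The last coordinate of a point of `ℝⁿ` (zero when `n = 0`). -/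
noncomputable def lastCoord {n : ℕ} (x : EuclideanSpace ℝ (Fin n)) : ℝ :=
  if h : 0 < n then x ⟨n - 1, by omega⟩ else 0

/-- `η(ω) = 2/(|ω'|² + (ω_n + 1)²) = 2/(‖ω‖² + 2ω_n + 1)`. -/
noncomputable def eta {n : ℕ} (x : EuclideanSpace ℝ (Fin n)) : ℝ :=
  2 / (‖x‖ ^ 2 + 2 * lastCoord x + 1)

/-- The conformal map `Tω = η(ω)(ω', (1 − ‖ω‖²)/2)` from the unit ball onto the
upper halfspace. -/
noncomputable def Tmap {n : ℕ} (x : EuclideanSpace ℝ (Fin n)) : EuclideanSpace ℝ (Fin n) :=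
  (EuclideanSpace.equiv (Fin n) ℝ).symm
    (fun i => if (i : ℕ) = n - 1 then eta x * (1 - ‖x‖ ^ 2) / 2 else eta x * x i)

open EuclideanGeometry in
section
open EuclideanGeometry

namespace TmapAux

variable {n : ℕ}

def i0 (hn : 0 < n) : Fin n := ⟨n - 1, by omega⟩

noncomputable def cpt (n : ℕ) (hn : 0 < n) : EuclideanSpace ℝ (Fin n) :=
  -(EuclideanSpace.single (i0 hn) (1 : ℝ))

lemma lastCoord_eq (hn : 0 < n) (x : EuclideanSpace ℝ (Fin n)) :
    lastCoord x = x (i0 hn) := by simp [lastCoord, hn, i0]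

lemma Tmap_apply (hn : 0 < n) (x : EuclideanSpace ℝ (Fin n)) (i : Fin n) :
    Tmap x i = if (i : ℕ) = n - 1 then eta x * (1 - ‖x‖ ^ 2) / 2 else eta x * x i := rfl

lemma cpt_apply (hn : 0 < n) (i : Fin n) :
    cpt n hn i = if i = i0 hn then (-1 : ℝ) else 0 := by
  simp [cpt, EuclideanSpace.single_apply]
  split <;> simp

lemma norm_cpt (hn : 0 < n) : ‖cpt n hn‖ = 1 := by
  simp [cpt]

lemma norm_sub_cpt_sq (hn : 0 < n) (x : EuclideanSpace ℝ (Fin n)) :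
    ‖x - cpt n hn‖ ^ 2 = ‖x‖ ^ 2 + 2 * lastCoord x + 1 := by
  have h2 : (inner ℝ x (cpt n hn) : ℝ) = -(lastCoord x) := by
    simp [cpt, inner_neg_right, EuclideanSpace.inner_single_right, lastCoord_eq hn]
  rw [norm_sub_sq_real, h2, norm_cpt hn]
  ring

end TmapAux

namespace TmapAux

lemma D_pos (hn : 0 < n) {x : EuclideanSpace ℝ (Fin n)} (hx : x ≠ cpt n hn) :
    0 < ‖x‖ ^ 2 + 2 * lastCoord x + 1 := by
  rw [← norm_sub_cpt_sq hn]
  have : x - cpt n hn ≠ 0 := sub_ne_zero.2 hx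
  exact pow_pos (norm_pos_iff.mpr this) 2

lemma eta_pos (hn : 0 < n) {x : EuclideanSpace ℝ (Fin n)} (hx : x ≠ cpt n hn) :
    0 < eta x := by
  have := D_pos hn hx
  rw [eta]; exact div_pos two_pos this

lemma Tmap_eq_inversion (hn : 0 < n) {x : EuclideanSpace ℝ (Fin n)} (hx : x ≠ cpt n hn) :
    Tmap x = inversion (cpt n hn) (Real.sqrt 2) x := by
  have hD := D_pos hn hx
  have hfac : (Real.sqrt 2 / dist x (cpt n hn)) ^ 2 = eta x := by
    rw [div_pow, Real.sq_sqrt (by norm_num), dist_eq_norm, norm_sub_cpt_sq hn, eta]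
  ext i
  rw [inversion_def]
  show Tmap x i = ((Real.sqrt 2 / dist x (cpt n hn)) ^ 2 • (x - cpt n hn) + cpt n hn) i
  rw [PiLp.add_apply, PiLp.smul_apply, PiLp.sub_apply, hfac, cpt_apply hn,
    Tmap_apply hn, smul_eq_mul]
  by_cases h : (i : ℕ) = n - 1
  · have : i = i0 hn := by apply Fin.ext; exact h
    rw [if_pos h, if_pos this, eta, this, ← lastCoord_eq hn x]
    field_simp
    ring
  · have : i ≠ i0 hn := by intro he; exact h (by rw [he]; rfl)
    rw [if_neg h, if_neg this]
    ring

lemma lastCoord_Tmap (hn : 0 < n) (x : EuclideanSpace ℝ (Fin n)) :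
    lastCoord (Tmap x) = (1 - ‖x‖ ^ 2) / (‖x‖ ^ 2 + 2 * lastCoord x + 1) := by
  rw [lastCoord_eq hn, Tmap_apply hn,
    if_pos (show ((i0 hn : Fin n) : ℕ) = n - 1 from rfl), eta]
  rcases eq_or_ne (‖x‖ ^ 2 + 2 * lastCoord x + 1) 0 with h | h
  · rw [h]; simp
  · field_simp

end TmapAux

namespace TmapAux

lemma sqrt2_ne : (Real.sqrt 2) ≠ 0 := by positivity

lemma ne_cpt_of_mem_ball (hn : 0 < n) {x : EuclideanSpace ℝ (Fin n)}
    (hx : x ∈ Metric.ball (0 : EuclideanSpace ℝ (Fin n)) 1) : x ≠ cpt n hn := by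
  intro h
  have := Metric.mem_ball.1 hx
  rw [dist_zero_right, h, norm_cpt hn] at this
  exact lt_irrefl _ this

lemma lastCoord_cpt (hn : 0 < n) : lastCoord (cpt n hn) = -1 := by
  rw [lastCoord_eq hn, cpt_apply hn, if_pos rfl]

lemma Tmap_ne_cpt (hn : 0 < n) {y : EuclideanSpace ℝ (Fin n)} (hy : y ≠ cpt n hn) :
    Tmap y ≠ cpt n hn := by
  intro h
  rw [Tmap_eq_inversion hn hy] at h
  have := congrArg (inversion (cpt n hn) (Real.sqrt 2)) h
  rw [inversion_inversion _ sqrt2_ne, inversion_self] at this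
  exact hy this

lemma Tmap_Tmap (hn : 0 < n) {y : EuclideanSpace ℝ (Fin n)} (hy : y ≠ cpt n hn) :
    Tmap (Tmap y) = y := by
  rw [Tmap_eq_inversion hn (Tmap_ne_cpt hn hy), Tmap_eq_inversion hn hy,
    inversion_inversion _ sqrt2_ne]

lemma injOn_Tmap (hn : 0 < n) :
    Set.InjOn Tmap (Metric.ball (0 : EuclideanSpace ℝ (Fin n)) 1) := by
  intro a ha b hb h
  have := congrArg Tmap h
  rwa [Tmap_Tmap hn (ne_cpt_of_mem_ball hn ha), Tmap_Tmap hn (ne_cpt_of_mem_ball hn hb)] at this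

lemma mem_ball_iff_norm_sq {x : EuclideanSpace ℝ (Fin n)} :
    x ∈ Metric.ball (0 : EuclideanSpace ℝ (Fin n)) 1 ↔ ‖x‖ ^ 2 < 1 := by
  rw [Metric.mem_ball, dist_zero_right]
  constructor
  · intro h; nlinarith [norm_nonneg x]
  · intro h; nlinarith [norm_nonneg x]

lemma image_Tmap_ball (hn : 0 < n) :
    Tmap '' Metric.ball (0 : EuclideanSpace ℝ (Fin n)) 1
      = {x : EuclideanSpace ℝ (Fin n) | 0 < lastCoord x} := by
  ext y
  constructor
  · rintro ⟨x, hx, rfl⟩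
    have hxc := ne_cpt_of_mem_ball hn hx
    have hD := D_pos hn hxc
    have h1 : 0 < 1 - ‖x‖ ^ 2 := by
      have := mem_ball_iff_norm_sq.1 hx; linarith
    simp only [Set.mem_setOf_eq, lastCoord_Tmap hn]
    exact div_pos h1 hD
  · intro hy
    have hy' : (0 : ℝ) < lastCoord y := hy
    have hyc : y ≠ cpt n hn := by
      intro h; rw [h, lastCoord_cpt hn] at hy'; linarith
    refine ⟨Tmap y, ?_, Tmap_Tmap hn hyc⟩
    have hxc := Tmap_ne_cpt hn hyc
    have hD := D_pos hn hxc
    have h2 : 0 < (1 - ‖Tmap y‖ ^ 2) / (‖Tmap y‖ ^ 2 + 2 * lastCoord (Tmap y) + 1) := by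
      rw [← lastCoord_Tmap hn, Tmap_Tmap hn hyc]; exact hy'
    rw [mem_ball_iff_norm_sq]
    have := (div_pos_iff.1 h2)
    rcases this with ⟨h3, _⟩ | ⟨_, h4⟩
    · linarith
    · linarith

end TmapAux

namespace TmapAux

noncomputable def Tder (n : ℕ) (hn : 0 < n) (x : EuclideanSpace ℝ (Fin n)) :
    EuclideanSpace ℝ (Fin n) →L[ℝ] EuclideanSpace ℝ (Fin n) :=
  ((Real.sqrt 2 / dist x (cpt n hn)) ^ 2) •
    ((Submodule.reflection (ℝ ∙ (x - cpt n hn))ᗮ).toContinuousLinearEquiv :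
      EuclideanSpace ℝ (Fin n) →L[ℝ] EuclideanSpace ℝ (Fin n))

lemma hasFDerivAt_Tmap (hn : 0 < n) {x : EuclideanSpace ℝ (Fin n)} (hx : x ≠ cpt n hn) :
    HasFDerivAt Tmap (Tder n hn x) x := by
  have h : HasFDerivAt (inversion (cpt n hn) (Real.sqrt 2))
      ((Real.sqrt 2 / dist x (cpt n hn)) ^ 2 •
        (Submodule.reflection (ℝ ∙ (x - cpt n hn))ᗮ :
          EuclideanSpace ℝ (Fin n) →L[ℝ] EuclideanSpace ℝ (Fin n))) x :=
    hasFDerivAt_inversion hx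
  have heq : Tmap =ᶠ[nhds x] inversion (cpt n hn) (Real.sqrt 2) :=
    Filter.eventuallyEq_of_mem (((isOpen_ne : IsOpen {y : EuclideanSpace ℝ (Fin n) | y ≠ cpt n hn}).mem_nhds hx))
      (fun y hy => Tmap_eq_inversion hn hy)
  exact h.congr_of_eventuallyEq heq

lemma abs_det_Tder (hn : 0 < n) {x : EuclideanSpace ℝ (Fin n)} (hx : x ≠ cpt n hn) :
    |(Tder n hn x).det| = eta x ^ n := by
  set K := (ℝ ∙ (x - cpt n hn))ᗮ
  set r : EuclideanSpace ℝ (Fin n) →ₗ[ℝ] EuclideanSpace ℝ (Fin n) :=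
    (((Submodule.reflection K).toContinuousLinearEquiv :
      EuclideanSpace ℝ (Fin n) →L[ℝ] EuclideanSpace ℝ (Fin n)) :
      EuclideanSpace ℝ (Fin n) →ₗ[ℝ] EuclideanSpace ℝ (Fin n)) with hr
  have hdet2 : LinearMap.det r * LinearMap.det r = 1 := by
    rw [← LinearMap.det_comp]
    have : r ∘ₗ r = LinearMap.id := by
      ext y
      simp [hr, Submodule.reflection_reflection]
    rw [this, LinearMap.det_id]
  have habs : |LinearMap.det r| = 1 := by
    rcases mul_self_eq_one_iff.1 hdet2 with h | h <;> rw [h] <;> norm_num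
  have hfac : (Real.sqrt 2 / dist x (cpt n hn)) ^ 2 = eta x := by
    rw [div_pow, Real.sq_sqrt (by norm_num), dist_eq_norm, norm_sub_cpt_sq hn, eta]
  have hcoe : ((Tder n hn x : EuclideanSpace ℝ (Fin n) →L[ℝ] EuclideanSpace ℝ (Fin n)) :
      EuclideanSpace ℝ (Fin n) →ₗ[ℝ] EuclideanSpace ℝ (Fin n))
      = (Real.sqrt 2 / dist x (cpt n hn)) ^ 2 • r := by
    rfl
  rw [ContinuousLinearMap.det, hcoe, LinearMap.det_smul, finrank_euclideanSpace_fin, hfac,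
    abs_mul, abs_pow, habs, mul_one, abs_of_nonneg (le_of_lt (eta_pos hn hx))]

end TmapAux

end

/-- The last coordinate identity `(Tx)_n = (1 − |x|²)/(|x'|² + (x_n+1)²)`, and the conformal
change of variables `∫_{ℝ₊ⁿ} f² x_n^{−α} dx = ∫_{B(0,1)} (2/(1−|ω|²))^α (η(ω)^{n/2*} f(Tω))² dω`
with `2* = 2n/(n−α)`. -/
theorem Tmap_lastCoord_and_hardy_weight (n : ℕ) (hn : 2 ≤ n) (α tstar : ℝ)
    (hα0 : 0 < α) (hαn : α < n) (htstar : tstar = 2 * n / ((n : ℝ) - α))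
    (f : EuclideanSpace ℝ (Fin n) → ℝ) (hf : Measurable f) :
    (∀ x : EuclideanSpace ℝ (Fin n),
      lastCoord (Tmap x) = (1 - ‖x‖ ^ 2) / (‖x‖ ^ 2 + 2 * lastCoord x + 1)) ∧
    (∫⁻ x in {x : EuclideanSpace ℝ (Fin n) | 0 < lastCoord x},
        ENNReal.ofReal (f x ^ 2 * lastCoord x ^ (-α))) =
      ∫⁻ ω in Metric.ball (0 : EuclideanSpace ℝ (Fin n)) 1,
        ENNReal.ofReal ((2 / (1 - ‖ω‖ ^ 2)) ^ α *
          (eta ω ^ ((n : ℝ) / tstar) * f (Tmap ω)) ^ 2) := by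
  have hn0 : 0 < n := by omega
  refine ⟨fun x => TmapAux.lastCoord_Tmap hn0 x, ?_⟩
  rw [← TmapAux.image_Tmap_ball hn0,
    lintegral_image_eq_lintegral_abs_det_fderiv_mul (μ := volume) measurableSet_ball
      (fun x hx => (TmapAux.hasFDerivAt_Tmap hn0
        (TmapAux.ne_cpt_of_mem_ball hn0 hx)).hasFDerivWithinAt)
      (TmapAux.injOn_Tmap hn0)
      (fun x => ENNReal.ofReal (f x ^ 2 * lastCoord x ^ (-α)))]
  apply setLIntegral_congr_fun measurableSet_ball
  intro x hx
  dsimp only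
  have hxc := TmapAux.ne_cpt_of_mem_ball hn0 hx
  have hD := TmapAux.D_pos hn0 hxc
  have hE := TmapAux.eta_pos hn0 hxc
  have hL : 0 < 1 - ‖x‖ ^ 2 := by
    have := TmapAux.mem_ball_iff_norm_sq.1 hx; linarith
  rw [TmapAux.abs_det_Tder hn0 hxc, TmapAux.lastCoord_Tmap hn0 x,
    ← ENNReal.ofReal_mul (by positivity)]
  congr 1
  set L := 1 - ‖x‖ ^ 2 with hLdef
  set D := ‖x‖ ^ 2 + 2 * lastCoord x + 1 with hDdef
  set E := eta x with hEdef
  set F := f (Tmap x) with hFdef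
  have hEeq : E = 2 / D := rfl
  have hq : (L / D) ^ (-α) = (2 / L) ^ α * E ^ (-α) := by
    have hq0 : (0 : ℝ) ≤ L / D := by positivity
    have hinv : (L / D)⁻¹ = 2 / L * E⁻¹ := by
      rw [hEeq]
      field_simp
    rw [Real.rpow_neg hq0, ← Real.inv_rpow hq0, hinv,
      Real.mul_rpow (by positivity) (by positivity),
      Real.inv_rpow hE.le, ← Real.rpow_neg hE.le]
  have hna : (0:ℝ) < (n:ℝ) - α := by
    have : (α:ℝ) < (n:ℝ) := hαn
    linarith
  have hc : (n : ℝ) / tstar * 2 = (n : ℝ) - α := by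
    rw [htstar]
    have h1 : ((n:ℝ)) ≠ 0 := by positivity
    have h2 : ((n:ℝ)) - α ≠ 0 := ne_of_gt hna
    field_simp
  have h2 : (E ^ ((n : ℝ) / tstar)) ^ (2:ℕ) = E ^ ((n : ℝ) - α) := by
    rw [← Real.rpow_natCast (E ^ ((n : ℝ) / tstar)) 2, ← Real.rpow_mul hE.le]
    norm_num [hc]
  have h3 : E ^ (n : ℕ) * E ^ (-α) = E ^ ((n : ℝ) - α) := by
    rw [← Real.rpow_natCast E n, ← Real.rpow_add hE, sub_eq_add_neg]
  rw [hq, mul_pow, h2, ← h3]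
  ring
end

section
/- Symmetrization vacancy: for the band integral, ∫_{1/(1−ε)}^∞ (t^{α−1} − t^{n−1}) (∫_{−1}^1 (1−s²)^{(n−3)/2} (t² + 1 − 2st)^{−(n+α)/2} ds) dt = ∫_0^{1−ε} (t^{n−1} − t^{α−1}) (∫_{−1}^1 (1−s²)^{(n−3)/2} (1 + t² − 2st)^{−(n+α)/2} ds) dt for all 0 < ε < 1; consequently ∫_{([1−ε, 1/(1−ε)])^c ∩ [0,∞)} (t^{α−1} − t^{n−1}) ∫_{−1}^1 (1−s²)^{(n−3)/2}(t²+1−2st)^{−(n+α)/2} ds dt = 0. -/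
/-!
Writing `A(t)` for the angular integral, the substitution `1/t² + 1 - 2s/t = (t² + 1 - 2st)/t²`
gives `A(1/t) = t^(n+α) A(t)`. Since the exponents `α - 1` and `n - 1` add up to `n + α - 2`,
the Jacobian `t⁻²` of `t ↦ 1/t` turns the band integrand `(t^(α-1) - t^(n-1)) A(t)` into its
negative: the integrand is odd under inversion. Hence its integral over `(1/(1-ε), ∞)` is minus
its integral over `(0, 1-ε)`, and on the complement of the band the two pieces cancel. Both pieces
converge because `α > 0`, `n > 1` and `A` is bounded on `[0, 1-ε]`.
-/

open MeasureTheory intervalIntegral Set Real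

theorem intervalIntegrable_one_sub_sq_rpow {e : ℝ} (he : -1 < e) :
    IntervalIntegrable (fun s : ℝ => (1 - s ^ 2) ^ e) volume (-1) 1 := by
  have hsing : IntervalIntegrable (fun s : ℝ => (1 - s) ^ e) volume 0 1 := by
    simpa using ((intervalIntegrable_rpow' (a := 0) (b := 1) he).comp_sub_left 1).symm
  have hreg : ContinuousOn (fun s : ℝ => (1 + s) ^ e) (uIcc 0 1) := by
    refine (continuousOn_const.add continuousOn_id).rpow_const fun s hs => Or.inl ?_
    rw [uIcc_of_le zero_le_one] at hs
    exact (by linarith [hs.1] : (0 : ℝ) < 1 + s).ne'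
  have hright : IntervalIntegrable (fun s : ℝ => (1 - s ^ 2) ^ e) volume 0 1 := by
    refine (hsing.mul_continuousOn hreg).congr fun s hs => ?_
    rw [uIoc_of_le zero_le_one] at hs
    rw [← mul_rpow (by linarith [hs.2]) (by linarith [hs.1])]
    ring_nf
  have hleft : IntervalIntegrable (fun s : ℝ => (1 - s ^ 2) ^ e) volume (-1) 0 := by
    simpa using ((IntervalIntegrable.iff_comp_neg).mp hright).symm
  exact hleft.trans hright

theorem Set.Ici_diff_Icc_of_le {X : Type*} [LinearOrder X] {a b c : X} (hac : a ≤ c) :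
    Ici a \ Icc b c = Ico a b ∪ Ioi c := by
  ext x
  simp only [mem_sdiff, mem_Ici, mem_Icc, mem_union, mem_Ico, mem_Ioi, not_and, not_le]
  constructor
  · rintro ⟨hax, hx⟩
    exact (lt_or_ge x b).imp (⟨hax, ·⟩) hx
  · rintro (⟨hax, hxb⟩ | hcx)
    · exact ⟨hax, fun hbx => absurd hxb hbx.not_gt⟩
    · exact ⟨hac.trans hcx.le, fun _ => hcx⟩

section Inversion

variable {E : Type*} [NormedAddCommGroup E] [NormedSpace ℝ E]

theorem image_inv_Ioo_zero_inv {a : ℝ} (ha : 0 < a) : (fun x : ℝ => x⁻¹) '' Ioo 0 a⁻¹ = Ioi a := by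
  rw [image_inv_eq_inv, inv_Ioo_0_left (inv_pos.2 ha), inv_inv]

theorem integrableOn_Ioi_iff_integrableOn_Ioo_inv {a : ℝ} (ha : 0 < a) (g : ℝ → E) :
    IntegrableOn g (Ioi a) ↔ IntegrableOn (fun x => (x ^ 2)⁻¹ • g x⁻¹) (Ioo 0 a⁻¹) := by
  have := integrableOn_image_iff_integrableOn_abs_deriv_smul (s := Ioo 0 a⁻¹) measurableSet_Ioo
    (fun x hx => (hasDerivAt_inv hx.1.ne').hasDerivWithinAt) inv_injective.injOn g
  simpa only [image_inv_Ioo_zero_inv ha, abs_neg, abs_inv, abs_sq] using this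

theorem integral_Ioi_eq_integral_Ioo_inv {a : ℝ} (ha : 0 < a) (g : ℝ → E) :
    ∫ t in Ioi a, g t = ∫ x in Ioo 0 a⁻¹, (x ^ 2)⁻¹ • g x⁻¹ := by
  have := integral_image_eq_integral_abs_deriv_smul (s := Ioo 0 a⁻¹) measurableSet_Ioo
    (fun x hx => (hasDerivAt_inv hx.1.ne').hasDerivWithinAt) inv_injective.injOn g
  simpa only [image_inv_Ioo_zero_inv ha, abs_neg, abs_inv, abs_sq] using this

theorem integral_Ioi_inv_eq_neg_of_inv_antisymm {g : ℝ → E} {b : ℝ} (hb : 0 < b)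
    (hg : ∀ x ∈ Ioo 0 b, (x ^ 2)⁻¹ • g x⁻¹ = -g x) :
    ∫ t in Ioi b⁻¹, g t = -∫ t in Ioo 0 b, g t := by
  rw [integral_Ioi_eq_integral_Ioo_inv (inv_pos.2 hb), inv_inv, ← MeasureTheory.integral_neg]
  exact setIntegral_congr_fun measurableSet_Ioo hg

theorem integrableOn_Ioi_inv_of_inv_antisymm {g : ℝ → E} {b : ℝ} (hint : IntegrableOn g (Ioo 0 b))
    (hb : 0 < b) (hg : ∀ x ∈ Ioo 0 b, (x ^ 2)⁻¹ • g x⁻¹ = -g x) :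
    IntegrableOn g (Ioi b⁻¹) := by
  rw [integrableOn_Ioi_iff_integrableOn_Ioo_inv (inv_pos.2 hb), inv_inv]
  exact hint.neg.congr_fun (fun x hx => (hg x hx).symm) measurableSet_Ioo

theorem setIntegral_Ici_diff_Icc_inv_eq_zero_of_inv_antisymm {g : ℝ → E} {b : ℝ}
    (hint : IntegrableOn g (Ioo 0 b)) (hb0 : 0 < b) (hb1 : b ≤ 1)
    (hg : ∀ x ∈ Ioo 0 b, (x ^ 2)⁻¹ • g x⁻¹ = -g x) :
    ∫ t in Ici 0 \ Icc b b⁻¹, g t = 0 := by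
  have hb_inv : b ≤ b⁻¹ := hb1.trans ((one_le_inv₀ hb0).2 hb1)
  have hdisj : Disjoint (Ico 0 b) (Ioi b⁻¹) :=
    (Iic_disjoint_Ioi hb_inv).mono_left (Ico_subset_Icc_self.trans Icc_subset_Iic_self)
  rw [Ici_diff_Icc_of_le (hb0.le.trans hb_inv),
    setIntegral_union hdisj measurableSet_Ioi ((integrableOn_Ico_iff_integrableOn_Ioo).2 hint)
      (integrableOn_Ioi_inv_of_inv_antisymm hint hb0 hg),
    integral_Ico_eq_integral_Ioo, integral_Ioi_inv_eq_neg_of_inv_antisymm hb0 hg, add_neg_cancel]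

end Inversion

/-- With `e = (n-3)/2`, this is the average of `|t ω - u|^(2r)` over unit vectors `ω ∈ ℝⁿ`
(up to a constant), for a fixed unit vector `u`; `s` is the cosine of the angle between `ω` and
`u`. -/
noncomputable def angularIntegral (e r t : ℝ) : ℝ :=
  ∫ s in (-1 : ℝ)..1, (1 - s ^ 2) ^ e * (t ^ 2 + 1 - 2 * s * t) ^ r

theorem measurable_angularIntegral (e r : ℝ) : Measurable (angularIntegral e r) := by
  have hF : StronglyMeasurable fun p : ℝ × ℝ =>
      (1 - p.2 ^ 2) ^ e * (p.1 ^ 2 + 1 - 2 * p.2 * p.1) ^ r := by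
    fun_prop
  have hIoc : angularIntegral e r = fun t => ∫ s in Ioc (-1 : ℝ) 1,
      (1 - s ^ 2) ^ e * (t ^ 2 + 1 - 2 * s * t) ^ r :=
    funext fun t => integral_of_le (by norm_num)
  rw [hIoc]
  exact (hF.integral_prod_right' (ν := volume.restrict (Ioc (-1 : ℝ) 1))).measurable

theorem sq_one_sub_le_of_nonneg {s t : ℝ} (ht : 0 ≤ t) (hs : s ≤ 1) :
    (1 - t) ^ 2 ≤ t ^ 2 + 1 - 2 * s * t := by
  nlinarith

theorem norm_angularIntegral_le {e r t b : ℝ} (he : -1 < e) (hr : r ≤ 0) (ht : 0 ≤ t)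
    (htb : t ≤ b) (hb : b < 1) :
    ‖angularIntegral e r t‖ ≤ ((1 - b) ^ 2) ^ r * ∫ s in (-1 : ℝ)..1, (1 - s ^ 2) ^ e := by
  rw [← intervalIntegral.integral_const_mul]
  refine intervalIntegral.norm_integral_le_of_norm_le (by norm_num) (ae_of_all _ fun s hs => ?_)
    ((intervalIntegrable_one_sub_sq_rpow he).const_mul _)
  have hw : 0 ≤ 1 - s ^ 2 := by nlinarith [hs.1, hs.2]
  have hq : (1 - b) ^ 2 ≤ t ^ 2 + 1 - 2 * s * t :=
    (pow_le_pow_left₀ (by linarith) (by linarith) 2).trans (sq_one_sub_le_of_nonneg ht hs.2)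
  have hb2 : 0 < (1 - b) ^ 2 := by nlinarith
  rw [norm_mul, norm_of_nonneg (rpow_nonneg hw _), norm_of_nonneg (rpow_nonneg (hb2.le.trans hq) _),
    mul_comm]
  exact mul_le_mul_of_nonneg_right (rpow_le_rpow_of_nonpos hb2 hq hr) (rpow_nonneg hw _)

theorem integrableOn_rpow_sub_rpow_mul_angularIntegral {e r p q b : ℝ} (he : -1 < e) (hr : r ≤ 0)
    (hp : -1 < p) (hq : -1 < q) (hb : b < 1) :
    IntegrableOn (fun t => (t ^ p - t ^ q) * angularIntegral e r t) (Ioo 0 b) := by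
  rcases le_or_gt b 0 with hb0 | hb0
  · simp [Ioo_eq_empty_of_le hb0]
  have hpow : IntegrableOn (fun t : ℝ => t ^ p - t ^ q) (Ioo 0 b) := by
    rw [← intervalIntegrable_iff_integrableOn_Ioo_of_le hb0.le]
    exact (intervalIntegrable_rpow' hp).sub (intervalIntegrable_rpow' hq)
  refine hpow.mul_bdd (c := ((1 - b) ^ 2) ^ r * ∫ s in (-1 : ℝ)..1, (1 - s ^ 2) ^ e)
    (measurable_angularIntegral e r).aestronglyMeasurable ?_
  filter_upwards [ae_restrict_mem measurableSet_Ioo] with t ht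
  exact norm_angularIntegral_le he hr ht.1.le ht.2.le hb

theorem angularIntegral_inv {e r x : ℝ} (hx : 0 < x) :
    angularIntegral e r x⁻¹ = x ^ (-2 * r) * angularIntegral e r x := by
  rw [angularIntegral, angularIntegral, ← intervalIntegral.integral_const_mul]
  refine integral_congr fun s hs => ?_
  rw [uIcc_of_le (by norm_num)] at hs
  have hq : 0 ≤ x ^ 2 + 1 - 2 * s * x := (sq_nonneg _).trans (sq_one_sub_le_of_nonneg hx.le hs.2)
  have hscale : x⁻¹ ^ 2 + 1 - 2 * s * x⁻¹ = (x ^ 2)⁻¹ * (x ^ 2 + 1 - 2 * s * x) := by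
    field_simp
    ring
  have hpow : ((x ^ 2) ^ r)⁻¹ = x ^ (-2 * r) := by
    rw [← rpow_natCast x 2, ← rpow_mul hx.le, ← rpow_neg hx.le]
    push_cast
    ring_nf
  rw [hscale, mul_rpow (by positivity) hq, inv_rpow (by positivity), hpow]
  ring

theorem inv_sq_mul_rpow_sub_rpow_mul_angularIntegral_inv {e r p q x : ℝ} (hx : 0 < x)
    (hpq : p + q + 2 = -2 * r) :
    (x ^ 2)⁻¹ * ((x⁻¹ ^ p - x⁻¹ ^ q) * angularIntegral e r x⁻¹) =
      -((x ^ p - x ^ q) * angularIntegral e r x) := by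
  have hcancel : ∀ c d : ℝ, (x ^ 2)⁻¹ * x⁻¹ ^ c * x ^ (c + d + 2) = x ^ d := fun c d => by
    rw [inv_rpow hx.le, ← rpow_neg hx.le, ← rpow_natCast, ← rpow_neg hx.le, ← rpow_add hx,
      ← rpow_add hx]
    congr 1
    ring
  rw [angularIntegral_inv hx, ← hpq, ← hcancel p q, ← hcancel q p, add_comm q p]
  ring

theorem band_integral_symmetrization_general (n : ℕ) (hn : 2 ≤ n) (α ε : ℝ) (hα0 : 0 < α)
    (hε0 : 0 < ε) (hε1 : ε < 1) :
    (∫ t in Set.Ioi (1 / (1 - ε)), (t ^ (α - 1) - t ^ ((n : ℝ) - 1)) *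
        ∫ s in (-1 : ℝ)..1,
          (1 - s ^ 2) ^ (((n : ℝ) - 3) / 2) * (t ^ 2 + 1 - 2 * s * t) ^ (-((n : ℝ) + α) / 2)) =
      (∫ t in (0 : ℝ)..(1 - ε), (t ^ ((n : ℝ) - 1) - t ^ (α - 1)) *
        ∫ s in (-1 : ℝ)..1,
          (1 - s ^ 2) ^ (((n : ℝ) - 3) / 2) * (1 + t ^ 2 - 2 * s * t) ^ (-((n : ℝ) + α) / 2)) ∧
    (∫ t in Set.Ici (0 : ℝ) \ Set.Icc (1 - ε) (1 / (1 - ε)),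
        (t ^ (α - 1) - t ^ ((n : ℝ) - 1)) *
        ∫ s in (-1 : ℝ)..1,
          (1 - s ^ 2) ^ (((n : ℝ) - 3) / 2) * (t ^ 2 + 1 - 2 * s * t) ^ (-((n : ℝ) + α) / 2)) = 0 := by
  have hn' : (2 : ℝ) ≤ n := by exact_mod_cast hn
  have he : -1 < ((n : ℝ) - 3) / 2 := by linarith
  have hr : -((n : ℝ) + α) / 2 ≤ 0 := by linarith
  have hb0 : 0 < 1 - ε := by linarith
  set e := ((n : ℝ) - 3) / 2
  set r := -((n : ℝ) + α) / 2
  set b := 1 - ε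
  have hfold : ∀ t : ℝ, (∫ s in (-1 : ℝ)..1, (1 - s ^ 2) ^ e * (t ^ 2 + 1 - 2 * s * t) ^ r) =
      angularIntegral e r t := fun _ => rfl
  have hrearrange : ∀ t : ℝ, (∫ s in (-1 : ℝ)..1, (1 - s ^ 2) ^ e * (1 + t ^ 2 - 2 * s * t) ^ r) =
      angularIntegral e r t := fun t => integral_congr fun s _ => by rw [add_comm 1 (t ^ 2)]
  simp only [hrearrange, hfold, one_div]
  set F := fun t : ℝ => (t ^ (α - 1) - t ^ ((n : ℝ) - 1)) * angularIntegral e r t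
  have hF : IntegrableOn F (Ioo 0 b) :=
    integrableOn_rpow_sub_rpow_mul_angularIntegral he hr (by linarith) (by linarith) (by linarith)
  have hF_antisymm : ∀ x ∈ Ioo 0 b, (x ^ 2)⁻¹ • F x⁻¹ = -F x := fun x hx =>
    inv_sq_mul_rpow_sub_rpow_mul_angularIntegral_inv hx.1 (by ring)
  refine ⟨?_, setIntegral_Ici_diff_Icc_inv_eq_zero_of_inv_antisymm hF hb0 (by linarith) hF_antisymm⟩
  rw [integral_Ioi_inv_eq_neg_of_inv_antisymm hb0 hF_antisymm, integral_of_le hb0.le,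
    integral_Ioc_eq_integral_Ioo, ← MeasureTheory.integral_neg]
  congr 1 with t
  ring

/-- Symmetrization identity for the band integral under `t ↦ 1/t`, and the consequent vanishing
of the integral over the complement of `[1−ε, 1/(1−ε)]` in `[0,∞)`. -/
theorem band_integral_symmetrization (n : ℕ) (hn : 2 ≤ n) (α ε : ℝ) (hα0 : 0 < α)
    (hα2 : α < 2) (hε0 : 0 < ε) (hε1 : ε < 1) :
    (∫ t in Set.Ioi (1 / (1 - ε)), (t ^ (α - 1) - t ^ ((n : ℝ) - 1)) *
        ∫ s in (-1 : ℝ)..1,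
          (1 - s ^ 2) ^ (((n : ℝ) - 3) / 2) * (t ^ 2 + 1 - 2 * s * t) ^ (-((n : ℝ) + α) / 2)) =
      (∫ t in (0 : ℝ)..(1 - ε), (t ^ ((n : ℝ) - 1) - t ^ (α - 1)) *
        ∫ s in (-1 : ℝ)..1,
          (1 - s ^ 2) ^ (((n : ℝ) - 3) / 2) * (1 + t ^ 2 - 2 * s * t) ^ (-((n : ℝ) + α) / 2)) ∧
    (∫ t in Set.Ici (0 : ℝ) \ Set.Icc (1 - ε) (1 / (1 - ε)),
        (t ^ (α - 1) - t ^ ((n : ℝ) - 1)) *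
        ∫ s in (-1 : ℝ)..1,
          (1 - s ^ 2) ^ (((n : ℝ) - 3) / 2) * (t ^ 2 + 1 - 2 * s * t) ^ (-((n : ℝ) + α) / 2)) = 0 :=
  band_integral_symmetrization_general n hn α ε hα0 hε0 hε1
end
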